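/- arXiv:1407.3335 — 2 statements merged into one kernel-verified Lean document; each statement's English description precedes it below -/
import Mathlib

section
/- Let L be an n×n real matrix with L·1 = 0 and let w ∈ ℝⁿ satisfy wᵀL = 0, wᵀ1 = 1. Suppose exp(-Lt) → 1wᵀ as t → ∞ and (I - hL)ᵏ → 1wᵀ as k → ∞. Then for any sequences t_c(m) ≥ 0 of reals and t_d(m) ≥ 0 of integers with t_c(m) + t_d(m) → ∞, the product exp(-L t_c(m))·(I - hL)^{t_d(m)} converges to 1wᵀ. Consequently the switched system converges to consensus at value wᵀx(0) from any initial state x(0). -/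
/-!
Both `E t = exp(-tL)` and `A = I - hL` generate semigroups converging to the same limit `P`,
so `P` is idempotent and absorbs them: `E t * P = P = P * A ^ k`. Hence
`E t * A ^ k - P = (E t - P) * (A ^ k - P)`. Both factors are bounded (for `t ≥ 0`), and since
`t_c + t_d → ∞`, eventually `t_c` or `t_d` is large, making the corresponding factor small.
-/

open Matrix Filter

open Set Topology Bornology

namespace Filter.Tendsto

variable {G M : Type*} [AddCommMonoid G] [PartialOrder G] [IsOrderedAddMonoid G]
  [IsDirectedOrder G] [Mul M] [TopologicalSpace M] [ContinuousMul M] [T2Space M] {f : G → M} {p : M}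

theorem apply_mul_eq_of_map_add (hf : Tendsto f atTop (𝓝 p))
    (hadd : ∀ s t, f (s + t) = f s * f t) {s : G} (hs : 0 ≤ s) : f s * p = p := by
  have hshift : Tendsto (s + ·) atTop atTop :=
    tendsto_atTop_mono (fun _ => le_add_of_nonneg_left hs) tendsto_id
  refine tendsto_nhds_unique (hf.const_mul (f s)) ?_
  simpa only [Function.comp_def, hadd] using hf.comp hshift

theorem mul_apply_eq_of_map_add (hf : Tendsto f atTop (𝓝 p))
    (hadd : ∀ s t, f (s + t) = f s * f t) {t : G} (ht : 0 ≤ t) : p * f t = p := by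
  have hshift : Tendsto (· + t) atTop atTop :=
    tendsto_atTop_mono (fun _ => le_add_of_nonneg_right ht) tendsto_id
  refine tendsto_nhds_unique (hf.mul_const (f t)) ?_
  simpa only [Function.comp_def, hadd] using hf.comp hshift

theorem isIdempotentElem_of_map_add (hf : Tendsto f atTop (𝓝 p))
    (hadd : ∀ s t, f (s + t) = f s * f t) : IsIdempotentElem p := by
  refine tendsto_nhds_unique (hf.mul_const p) (tendsto_const_nhds.congr' ?_)
  filter_upwards [eventually_ge_atTop 0] with s hs
  exact (hf.apply_mul_eq_of_map_add hadd hs).symm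

end Filter.Tendsto

theorem sub_mul_sub_eq_mul_sub_of_absorbs {R : Type*} [NonUnitalNonAssocRing R] {e d p : R}
    (he : e * p = p) (hd : p * d = p) (hp : IsIdempotentElem p) :
    (e - p) * (d - p) = e * d - p := by
  rw [sub_mul, mul_sub, mul_sub, he, hd, hp.eq]
  abel

theorem Filter.le_comap_sup_comap_of_tendsto_add {ι α : Type*} [AddCommMonoid α] [LinearOrder α]
    [IsOrderedCancelAddMonoid α] {l : Filter ι} {u v : ι → α}
    (h : Tendsto (fun i => u i + v i) l atTop) : l ≤ comap u atTop ⊔ comap v atTop := by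
  intro s hs
  obtain ⟨⟨A, hA, hAs⟩, ⟨B, hB, hBs⟩⟩ := mem_sup.1 hs
  obtain ⟨a, ha⟩ := mem_atTop_sets.1 hA
  obtain ⟨b, hb⟩ := mem_atTop_sets.1 hB
  filter_upwards [h.eventually_ge_atTop (a + b)] with i hi
  by_cases hu : a ≤ u i
  · exact hAs (ha _ hu)
  · exact hBs (hb _ (le_of_not_gt fun hv => (add_lt_add (not_le.1 hu) hv).not_ge hi))

theorem isBounded_image_Ici_of_tendsto {E : Type*} [PseudoMetricSpace E] {f : ℝ → E} {a : ℝ}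
    {p : E} (hf : ContinuousOn f (Ici a)) (h : Tendsto f atTop (𝓝 p)) :
    IsBounded (f '' Ici a) := by
  obtain ⟨T, hT⟩ := mem_atTop_sets.1 (h (Metric.ball_mem_nhds p one_pos))
  have hsplit : Ici a ⊆ Icc a T ∪ Ici T := fun t ht => (le_total t T).imp (⟨ht, ·⟩) id
  refine IsBounded.subset ?_ ((image_mono hsplit).trans (image_union ..).subset)
  refine ((isCompact_Icc.image_of_continuousOn (hf.mono Icc_subset_Ici_self)).isBounded).union ?_
  exact Metric.isBounded_ball.subset (image_subset_iff.2 hT)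

theorem tendsto_mul_comp_of_tendsto_add {R ι : Type*} [NonUnitalSeminormedRing R]
    {f : ℝ → R} {g : ℕ → R} (hf : Tendsto f atTop (𝓝 0)) (hf_bdd : IsBounded (f '' Ici 0))
    (hg : Tendsto g atTop (𝓝 0)) {l : Filter ι} {u : ι → ℝ} {v : ι → ℕ} (hu : ∀ i, 0 ≤ u i)
    (huv : Tendsto (fun i => u i + v i) l atTop) :
    Tendsto (fun i => f (u i) * g (v i)) l (𝓝 0) := by
  have hl : l ≤ comap u atTop ⊔ comap v atTop := by
    have h := le_comap_sup_comap_of_tendsto_add huv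
    rwa [show (fun i => (v i : ℝ)) = Nat.cast ∘ v from rfl, ← comap_comap,
      Nat.comap_cast_atTop] at h
  obtain ⟨Cf, hCf⟩ := isBounded_iff_forall_norm_le.1 hf_bdd
  obtain ⟨Cg, hCg⟩ := isBounded_iff_forall_norm_le.1 (Metric.isBounded_range_of_tendsto g hg)
  refine (tendsto_sup.2 ⟨?_, ?_⟩).mono_left hl
  · exact (hf.comp tendsto_comap).zero_mul_isBoundedUnder_le
      (isBoundedUnder_of ⟨Cg, fun i => hCg _ (mem_range_self _)⟩)
  · exact isBoundedUnder_le_mul_tendsto_zero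
      (isBoundedUnder_of ⟨Cf, fun i => hCf _ (mem_image_of_mem f (hu i))⟩) (hg.comp tendsto_comap)

open scoped Matrix.Norms.Operator

theorem stmt_10_general (n : ℕ) (L : Matrix (Fin n) (Fin n) ℝ) (w : Fin n → ℝ) (h : ℝ)
    (P : Matrix (Fin n) (Fin n) ℝ)
    (hP : P = Matrix.vecMulVec (fun _ => (1 : ℝ)) w)
    (hct : Tendsto (fun t : ℝ => NormedSpace.exp (-(t • L))) atTop (nhds P))
    (hdt : Tendsto (fun k : ℕ => ((1 : Matrix (Fin n) (Fin n) ℝ) - h • L) ^ k)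
      atTop (nhds P))
    (tc : ℕ → ℝ) (htc : ∀ m, 0 ≤ tc m) (td : ℕ → ℕ)
    (htot : Tendsto (fun m => tc m + (td m : ℝ)) atTop atTop) :
    Tendsto (fun m => NormedSpace.exp (-(tc m • L)) *
        ((1 : Matrix (Fin n) (Fin n) ℝ) - h • L) ^ (td m)) atTop (nhds P) ∧
    ∀ x0 : Fin n → ℝ,
      Tendsto (fun m => (NormedSpace.exp (-(tc m • L)) *
          ((1 : Matrix (Fin n) (Fin n) ℝ) - h • L) ^ (td m)) *ᵥ x0)
        atTop (nhds (fun _ => w ⬝ᵥ x0)) := by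
  set E : ℝ → Matrix (Fin n) (Fin n) ℝ := fun t => NormedSpace.exp (-(t • L))
  set A := (1 : Matrix (Fin n) (Fin n) ℝ) - h • L
  have hE_add : ∀ s t, E (s + t) = E s * E t := fun s t => by
    simp only [E]
    rw [← Matrix.exp_add_of_commute _ _ ((Commute.refl L).smul_left s |>.smul_right t
      |>.neg_left.neg_right)]
    congr 1
    module
  have hE_cont : Continuous E := NormedSpace.exp_continuous.comp (by fun_prop)
  have hE_bdd : IsBounded ((E · - P) '' Ici 0) :=
    isBounded_image_Ici_of_tendsto (hE_cont.sub continuous_const).continuousOn (hct.sub_const P)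
  have hconv : Tendsto (fun m => (E (tc m) - P) * (A ^ td m - P)) atTop (𝓝 0) :=
    tendsto_mul_comp_of_tendsto_add (f := (E · - P)) (g := (A ^ · - P))
      (sub_self P ▸ hct.sub_const P) hE_bdd (sub_self P ▸ hdt.sub_const P) htc htot
  have hlim : Tendsto (fun m => E (tc m) * A ^ td m) atTop (𝓝 P) := by
    refine tendsto_sub_nhds_zero_iff.1 (hconv.congr fun m => ?_)
    exact sub_mul_sub_eq_mul_sub_of_absorbs (hct.apply_mul_eq_of_map_add hE_add (htc m))
      (hdt.mul_apply_eq_of_map_add (pow_add A) (Nat.zero_le _))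
      (hdt.isIdempotentElem_of_map_add (pow_add A))
  refine ⟨hlim, fun x0 => ?_⟩
  have hPx : P *ᵥ x0 = fun _ => w ⬝ᵥ x0 := by
    ext i
    simp [hP, mulVec, vecMulVec_apply, dotProduct]
  rw [← hPx]
  exact ((continuous_id.matrix_mulVec continuous_const).tendsto P).comp hlim

/-- If `L·1 = 0`, `wᵀL = 0`, `wᵀ1 = 1`, `exp(-Lt) → 1wᵀ` and `(I - hL)ᵏ → 1wᵀ`,
then for any sequences `t_c(m) ≥ 0` (real) and `t_d(m)` (natural) with
`t_c(m) + t_d(m) → ∞`, `exp(-L t_c(m))·(I - hL)^{t_d(m)} → 1wᵀ`; consequently the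
switched system converges to consensus at value `wᵀx(0)` from any initial state. -/
theorem stmt_10 (n : ℕ) (L : Matrix (Fin n) (Fin n) ℝ) (w : Fin n → ℝ) (h : ℝ)
    (hL1 : L *ᵥ (fun _ => (1 : ℝ)) = 0)
    (hwL : w ᵥ* L = 0)
    (hw1 : w ⬝ᵥ (fun _ => (1 : ℝ)) = 1)
    (P : Matrix (Fin n) (Fin n) ℝ)
    (hP : P = Matrix.vecMulVec (fun _ => (1 : ℝ)) w)
    (hct : Tendsto (fun t : ℝ => NormedSpace.exp (-(t • L))) atTop (nhds P))
    (hdt : Tendsto (fun k : ℕ => ((1 : Matrix (Fin n) (Fin n) ℝ) - h • L) ^ k)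
      atTop (nhds P))
    (tc : ℕ → ℝ) (htc : ∀ m, 0 ≤ tc m) (td : ℕ → ℕ)
    (htot : Tendsto (fun m => tc m + (td m : ℝ)) atTop atTop) :
    Tendsto (fun m => NormedSpace.exp (-(tc m • L)) *
        ((1 : Matrix (Fin n) (Fin n) ℝ) - h • L) ^ (td m)) atTop (nhds P) ∧
    ∀ x0 : Fin n → ℝ,
      Tendsto (fun m => (NormedSpace.exp (-(tc m • L)) *
          ((1 : Matrix (Fin n) (Fin n) ℝ) - h • L) ^ (td m)) *ᵥ x0)
        atTop (nhds (fun _ => w ⬝ᵥ x0)) :=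
  stmt_10_general n L w h P hP hct hdt tc htc td htot
end

section
/- Let f : ℝ → ℝ be odd with f(x) = 0 iff x = 0, and γ₁x ≤ f(x) ≤ γ₂x for all x > 0 where 0 < γ₁ < γ₂. Let L be the Laplacian of a connected undirected weighted graph with adjacency a_ij = a_ji. Then for any x ∈ ℝⁿ with δ = x - ((1/n)1ᵀx)1, the nonlinear drift term satisfies Σᵢ δᵢ · Σⱼ a_ij f(xⱼ - xᵢ) = -(1/2)Σ_{i,j} a_ij (xⱼ - xᵢ) f(xⱼ - xᵢ) ≤ -γ₁ δᵀLδ ≤ -γ₁λ₂ δᵀδ. -/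
/-!
Summing by antisymmetry of `a_ij f(x_j - x_i)` gives the identity. Since `δ` differs from `x` by
a constant, the sector bound `γ₁ y² ≤ y f(y)` (extended to `y < 0` by oddness) compares the sum
termwise with the Laplacian quadratic form `2 δᵀLδ = ∑ a_ij (δ_j - δ_i)²`. Finally `δ` is
orthogonal to the kernel of the positive semidefinite `L`, so in an orthonormal eigenbasis of `L`
it only has components along eigenvalues that are positive, hence at least `λ₂`.
-/

open Matrix
open scoped InnerProductSpace

theorem LinearMap.IsPositive.mul_inner_self_le_inner_map_self {E : Type*}
    [NormedAddCommGroup E] [InnerProductSpace ℝ E] [FiniteDimensional ℝ E]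
    {T : E →ₗ[ℝ] E} (hT : T.IsPositive) {v : E} (hv : ∀ w, T w = 0 → ⟪w, v⟫_ℝ = 0)
    {lam : ℝ} (hlam : ∀ μ, 0 < μ → ∀ w, w ≠ 0 → T w = μ • w → lam ≤ μ) :
    lam * ⟪v, v⟫_ℝ ≤ ⟪v, T v⟫_ℝ := by
  have hsymm := hT.isSymmetric
  set b := hsymm.eigenvectorBasis rfl
  set μ := hsymm.eigenvalues rfl
  have hcoeff : ∀ k, lam * (⟪v, b k⟫_ℝ * ⟪b k, v⟫_ℝ) ≤ ⟪v, b k⟫_ℝ * ⟪b k, T v⟫_ℝ := by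
    intro k
    have hTb : T (b k) = μ k • b k := hsymm.apply_eigenvectorBasis rfl k
    rw [← hsymm, hTb, real_inner_smul_left, real_inner_comm (b k) v]
    rcases eq_or_ne ⟪b k, v⟫_ℝ 0 with hc | hc
    · simp [hc]
    have hμ_nonneg : 0 ≤ μ k := by
      simpa [hTb, real_inner_smul_right, b.orthonormal.1 k] using hT.inner_nonneg_right (b k)
    have hμ_ne : μ k ≠ 0 := fun h => hc (hv (b k) (by simp [hTb, h]))
    have hlam_le := hlam (μ k) (hμ_nonneg.lt_of_ne' hμ_ne) (b k) (b.orthonormal.ne_zero k) hTb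
    nlinarith [mul_self_nonneg ⟪b k, v⟫_ℝ]
  rw [← b.sum_inner_mul_inner v v, ← b.sum_inner_mul_inner v (T v), Finset.mul_sum]
  exact Finset.sum_le_sum fun k _ => hcoeff k

namespace Matrix

variable {ι R : Type*} [Fintype ι] [DecidableEq ι]

theorem PosSemidef.mul_dotProduct_self_le {L : Matrix ι ι ℝ} (hL : L.PosSemidef) {v : ι → ℝ}
    (hv : ∀ w, L *ᵥ w = 0 → w ⬝ᵥ v = 0)
    {lam : ℝ} (hlam : ∀ μ, 0 < μ → (∃ w, w ≠ 0 ∧ L *ᵥ w = μ • w) → lam ≤ μ) :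
    lam * (v ⬝ᵥ v) ≤ v ⬝ᵥ (L *ᵥ v) := by
  have key := (isPositive_toEuclideanLin_iff.mpr hL).mul_inner_self_le_inner_map_self
    (v := WithLp.toLp 2 v) (lam := lam) ?_ ?_
  · simpa only [EuclideanSpace.inner_toLp_toLp, star_trivial, toLpLin_toLp, toLin'_apply,
      dotProduct_comm] using key
  · intro w hw
    have := hv (WithLp.ofLp w) (by simpa using congrArg WithLp.ofLp hw)
    simpa [EuclideanSpace.inner_eq_star_dotProduct, dotProduct_comm] using this
  · intro μ hμ w hw hTw
    exact hlam μ hμ ⟨WithLp.ofLp w, by simpa using hw, by simpa using congrArg WithLp.ofLp hTw⟩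

def weightedLaplacian [AddCommGroup R] (A : Matrix ι ι R) : Matrix ι ι R :=
  diagonal (fun i => ∑ j, A i j) - A

theorem two_mul_dotProduct_weightedLaplacian_mulVec [CommRing R] {A : Matrix ι ι R}
    (hA : A.IsSymm) (v : ι → R) :
    2 * (v ⬝ᵥ (A.weightedLaplacian *ᵥ v)) = ∑ i, ∑ j, A i j * (v j - v i) ^ 2 := by
  have hswap : ∑ i, ∑ j, A i j * v j ^ 2 = ∑ i, ∑ j, A i j * v i ^ 2 := by
    rw [Finset.sum_comm]
    simp_rw [hA.apply]
  have hform :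
      v ⬝ᵥ (A.weightedLaplacian *ᵥ v) = ∑ i, ∑ j, A i j * (v i ^ 2 - v i * v j) := by
    rw [weightedLaplacian, sub_mulVec, dotProduct_sub]
    simp only [dotProduct, mulVec_diagonal]
    simp only [mulVec, dotProduct, Finset.sum_mul, Finset.mul_sum, ← Finset.sum_sub_distrib]
    exact Finset.sum_congr rfl fun i _ => Finset.sum_congr rfl fun j _ => by ring
  calc 2 * (v ⬝ᵥ (A.weightedLaplacian *ᵥ v))
      = ∑ i, ∑ j, A i j * v j ^ 2 + ∑ i, ∑ j, A i j * (v i ^ 2 - 2 * v i * v j) := by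
        rw [hswap, hform, Finset.mul_sum, ← Finset.sum_add_distrib]
        refine Finset.sum_congr rfl fun i _ => ?_
        rw [Finset.mul_sum, ← Finset.sum_add_distrib]
        exact Finset.sum_congr rfl fun j _ => by ring
    _ = ∑ i, ∑ j, A i j * (v j - v i) ^ 2 := by
        rw [← Finset.sum_add_distrib]
        refine Finset.sum_congr rfl fun i _ => ?_
        rw [← Finset.sum_add_distrib]
        exact Finset.sum_congr rfl fun j _ => by ring

theorem posSemidef_weightedLaplacian {A : Matrix ι ι ℝ} (hA : A.IsSymm)
    (hA_nonneg : ∀ i j, 0 ≤ A i j) : A.weightedLaplacian.PosSemidef := by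
  refine .of_dotProduct_mulVec_nonneg ?_ fun v => ?_
  · exact isHermitian_iff_isSymm.mpr ((isSymm_diagonal _).sub hA)
  · have hform := two_mul_dotProduct_weightedLaplacian_mulVec hA v
    have hsum_nonneg : 0 ≤ ∑ i, ∑ j, A i j * (v j - v i) ^ 2 :=
      Finset.sum_nonneg fun i _ => Finset.sum_nonneg fun j _ =>
        mul_nonneg (hA_nonneg i j) (sq_nonneg _)
    rw [star_trivial]
    linarith

end Matrix

theorem mul_sq_le_mul_apply_of_odd {f : ℝ → ℝ} (hodd : ∀ x, f (-x) = -f x) {γ : ℝ}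
    (hsector : ∀ x, 0 < x → γ * x ≤ f x) (y : ℝ) : γ * y ^ 2 ≤ y * f y := by
  rcases lt_trichotomy y 0 with hy | rfl | hy
  · nlinarith [hsector (-y) (neg_pos.mpr hy), hodd y]
  · simp
  · nlinarith [hsector y hy]

theorem two_mul_sum_mul_sum_of_antisymm {ι R : Type*} [Fintype ι] [CommRing R]
    {w : ι → ι → R} (hw : ∀ i j, w j i = -w i j) (δ : ι → R) :
    2 * ∑ i, δ i * ∑ j, w i j = -∑ i, ∑ j, (δ j - δ i) * w i j := by
  have hswap : ∑ i, ∑ j, δ j * w i j = -∑ i, ∑ j, δ i * w i j := by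
    rw [Finset.sum_comm, ← Finset.sum_neg_distrib]
    refine Finset.sum_congr rfl fun i _ => ?_
    rw [← Finset.sum_neg_distrib]
    exact Finset.sum_congr rfl fun j _ => by rw [hw]; ring
  have hdistrib : ∑ i, δ i * ∑ j, w i j = ∑ i, ∑ j, δ i * w i j :=
    Finset.sum_congr rfl fun i _ => Finset.mul_sum _ _ _
  simp only [hdistrib, sub_mul, Finset.sum_sub_distrib, hswap]
  ring

theorem sum_sub_mean_eq_zero {ι : Type*} [Fintype ι] (x : ι → ℝ) :
    ∑ i, (x i - (1 / (Fintype.card ι : ℝ)) * ∑ j, x j) = 0 := by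
  rcases isEmpty_or_nonempty ι with hι | hι
  · simp
  · rw [Finset.sum_sub_distrib, Finset.sum_const, Finset.card_univ, nsmul_eq_mul]
    field_simp
    ring

theorem stmt_15_general (n : ℕ)
    (f : ℝ → ℝ) (hodd : ∀ x : ℝ, f (-x) = -f x)
    (γ₁ γ₂ : ℝ) (hγ : 0 < γ₁ ∧ γ₁ < γ₂)
    (hsector : ∀ x : ℝ, 0 < x → γ₁ * x ≤ f x ∧ f x ≤ γ₂ * x)
    (A : Matrix (Fin n) (Fin n) ℝ)
    (hAsym : ∀ i j, A i j = A j i) (hAnonneg : ∀ i j, 0 ≤ A i j)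
    (L : Matrix (Fin n) (Fin n) ℝ)
    (hL : L = Matrix.diagonal (fun i => ∑ j, A i j) - A)
    (hker : ∀ v : Fin n → ℝ, L *ᵥ v = 0 → ∃ c : ℝ, v = fun _ => c)
    (lam2 : ℝ)
    (hmin : ∀ μ : ℝ, 0 < μ → (∃ v : Fin n → ℝ, v ≠ 0 ∧ L *ᵥ v = μ • v) → lam2 ≤ μ)
    (x : Fin n → ℝ) (δ : Fin n → ℝ)
    (hδ : δ = x - (fun _ => (1 / (n : ℝ)) * ((fun _ => (1 : ℝ)) ⬝ᵥ x))) :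
    (∑ i, δ i * ∑ j, A i j * f (x j - x i) =
      -(1 / 2) * ∑ i, ∑ j, A i j * (x j - x i) * f (x j - x i)) ∧
    (-(1 / 2) * ∑ i, ∑ j, A i j * (x j - x i) * f (x j - x i) ≤
      -γ₁ * (δ ⬝ᵥ (L *ᵥ δ))) ∧
    (-γ₁ * (δ ⬝ᵥ (L *ᵥ δ)) ≤ -γ₁ * lam2 * (δ ⬝ᵥ δ)) := by
  have hA : A.IsSymm := IsSymm.ext_iff.mpr fun i j => hAsym j i
  replace hL : L = A.weightedLaplacian := hL
  have hdiff : ∀ i j, δ j - δ i = x j - x i := fun i j => by simp [hδ]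
  have hsum : ∑ i, δ i = 0 := by simpa [hδ, dotProduct] using sum_sub_mean_eq_zero x
  have hquad : 2 * (δ ⬝ᵥ (L *ᵥ δ)) = ∑ i, ∑ j, A i j * (x j - x i) ^ 2 := by
    simp only [hL, two_mul_dotProduct_weightedLaplacian_mulVec hA, hdiff]
  refine ⟨?drift, ?sector, ?spectral⟩
  case drift =>
    have h := two_mul_sum_mul_sum_of_antisymm (w := fun i j => A i j * f (x j - x i))
      (fun i j => by rw [hAsym, ← neg_sub, hodd]; ring) δ
    simp only [hdiff, ← mul_assoc, mul_comm (x _ - x _) (A _ _)] at h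
    linarith
  case sector =>
    have hsum_le : γ₁ * (2 * (δ ⬝ᵥ (L *ᵥ δ))) ≤
        ∑ i, ∑ j, A i j * (x j - x i) * f (x j - x i) := by
      rw [hquad]
      simp_rw [Finset.mul_sum]
      refine Finset.sum_le_sum fun i _ => Finset.sum_le_sum fun j _ => ?_
      nlinarith [hAnonneg i j,
        mul_sq_le_mul_apply_of_odd hodd (fun y hy => (hsector y hy).1) (x j - x i)]
    linarith
  case spectral =>
    have hker_orth : ∀ w, L *ᵥ w = 0 → w ⬝ᵥ δ = 0 := by
      intro w hw
      obtain ⟨c, rfl⟩ := hker w hw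
      simp [dotProduct, ← Finset.mul_sum, hsum]
    have hrayleigh := (hL ▸ posSemidef_weightedLaplacian hA hAnonneg).mul_dotProduct_self_le
      hker_orth hmin
    linarith [mul_le_mul_of_nonneg_left hrayleigh hγ.1.le]

/-- Nonlinear drift estimate: for `f` odd, vanishing only at `0`, sector-bounded
(`γ₁x ≤ f(x) ≤ γ₂x` for `x > 0`, `0 < γ₁ < γ₂`), and `L` the Laplacian of a connected
undirected weighted graph with adjacency `A` and algebraic connectivity `λ₂`, for any
`x ∈ ℝⁿ` with `δ = x - ((1/n)1ᵀx)·1`: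
`∑ᵢ δᵢ ∑ⱼ a_ij f(xⱼ - xᵢ) = -(1/2)∑_{i,j} a_ij (xⱼ - xᵢ) f(xⱼ - xᵢ)
  ≤ -γ₁ δᵀLδ ≤ -γ₁λ₂ δᵀδ`. -/
theorem stmt_15 (n : ℕ) (hn : 0 < n)
    (f : ℝ → ℝ) (hodd : ∀ x : ℝ, f (-x) = -f x)
    (hzero : ∀ x : ℝ, f x = 0 ↔ x = 0)
    (γ₁ γ₂ : ℝ) (hγ : 0 < γ₁ ∧ γ₁ < γ₂)
    (hsector : ∀ x : ℝ, 0 < x → γ₁ * x ≤ f x ∧ f x ≤ γ₂ * x)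
    (A : Matrix (Fin n) (Fin n) ℝ)
    (hAsym : ∀ i j, A i j = A j i) (hAnonneg : ∀ i j, 0 ≤ A i j)
    (hAdiag : ∀ i, A i i = 0)
    (L : Matrix (Fin n) (Fin n) ℝ)
    (hL : L = Matrix.diagonal (fun i => ∑ j, A i j) - A)
    (hker : ∀ v : Fin n → ℝ, L *ᵥ v = 0 → ∃ c : ℝ, v = fun _ => c)
    (lam2 : ℝ) (hlam2pos : 0 < lam2)
    (heig2 : ∃ v : Fin n → ℝ, v ≠ 0 ∧ L *ᵥ v = lam2 • v)
    (hmin : ∀ μ : ℝ, 0 < μ → (∃ v : Fin n → ℝ, v ≠ 0 ∧ L *ᵥ v = μ • v) → lam2 ≤ μ)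
    (x : Fin n → ℝ) (δ : Fin n → ℝ)
    (hδ : δ = x - (fun _ => (1 / (n : ℝ)) * ((fun _ => (1 : ℝ)) ⬝ᵥ x))) :
    (∑ i, δ i * ∑ j, A i j * f (x j - x i) =
      -(1 / 2) * ∑ i, ∑ j, A i j * (x j - x i) * f (x j - x i)) ∧
    (-(1 / 2) * ∑ i, ∑ j, A i j * (x j - x i) * f (x j - x i) ≤
      -γ₁ * (δ ⬝ᵥ (L *ᵥ δ))) ∧
    (-γ₁ * (δ ⬝ᵥ (L *ᵥ δ)) ≤ -γ₁ * lam2 * (δ ⬝ᵥ δ)) :=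
  stmt_15_general n f hodd γ₁ γ₂ hγ hsector A hAsym hAnonneg L hL hker lam2 hmin x δ hδ
end
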